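/- arXiv:2502.10068 — 9 statements merged into one kernel-verified Lean document; each statement's English description precedes it below -/
import Mathlib

section
/- Every β-plurality point p has metric distortion at most 2/β + 1; that is, for every point q ∈ X, the social cost satisfies d(N,p) ≤ (2/β + 1)·d(N,q). -/
open scoped Classical

/-- Every `β`-plurality point has distortion at most `2/β + 1`. -/
theorem plurality_point_distortion {X : Type*} [MetricSpace X]
    (N : Finset X) (β : ℝ) (hβ0 : 0 < β) (hβ1 : β ≤ 1) (p : X)
    (hp : ∀ q : X, ((N.filter fun i => β * dist i p ≤ dist i q).card : ℝ) ≥ (N.card : ℝ) / 2) :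
    ∀ q : X, ∑ i ∈ N, dist i p ≤ (2 / β + 1) * ∑ i ∈ N, dist i q := by
  intro q
  set S := N.filter fun i => β * dist i p ≤ dist i q with hSdef
  have hSsub : S ⊆ N := Finset.filter_subset _ _
  set T := N \ S with hTdef
  -- |T| ≤ |S|
  have hcardN : S.card ≤ N.card := Finset.card_le_card hSsub
  have hcardT : (T.card : ℝ) ≤ S.card := by
    have h1 := hp q
    have h2 : T.card = N.card - S.card := Finset.card_sdiff_of_subset hSsub
    have h3 : (T.card : ℝ) = (N.card : ℝ) - S.card := by
      rw [h2, Nat.cast_sub hcardN]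
    rw [h3]; linarith
  -- bound for agents in S
  have hSbound : ∀ i ∈ S, dist i p ≤ (1 / β) * dist i q := by
    intro i hi
    have h := (Finset.mem_filter.mp hi).2
    rw [div_mul_eq_mul_div, one_mul, le_div_iff₀ hβ0]
    nlinarith
  have hSsum : ∑ i ∈ S, dist i p ≤ (1 / β) * ∑ i ∈ S, dist i q := by
    rw [Finset.mul_sum]
    exact Finset.sum_le_sum hSbound
  -- bound d(p,q) via agents of S
  have hpq : (S.card : ℝ) * dist p q ≤ (1 / β + 1) * ∑ i ∈ S, dist i q := by
    have : ∑ _i ∈ S, dist p q ≤ ∑ i ∈ S, (1 / β + 1) * dist i q := by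
      apply Finset.sum_le_sum
      intro i hi
      have h1 : dist p q ≤ dist i p + dist i q := by
        rw [dist_comm i p]; exact dist_triangle p i q
      have h2 := hSbound i hi
      nlinarith
    simpa [Finset.sum_const, nsmul_eq_mul, Finset.mul_sum] using this
  have hTsum : ∑ i ∈ T, dist i p ≤ ∑ i ∈ T, dist i q + (T.card : ℝ) * dist p q := by
    have : ∑ i ∈ T, dist i p ≤ ∑ i ∈ T, (dist i q + dist p q) := by
      apply Finset.sum_le_sum
      intro i _
      rw [dist_comm p q]
      exact dist_triangle i q p
    simpa [Finset.sum_add_distrib, Finset.sum_const, nsmul_eq_mul] using this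
  have hTS : (T.card : ℝ) * dist p q ≤ (S.card : ℝ) * dist p q :=
    mul_le_mul_of_nonneg_right hcardT dist_nonneg
  have hsplitP : ∑ i ∈ N, dist i p = ∑ i ∈ S, dist i p + ∑ i ∈ T, dist i p := by
    rw [hTdef, Finset.sum_sdiff_eq_sub hSsub]; ring
  have hsplitQ : ∑ i ∈ N, dist i q = ∑ i ∈ S, dist i q + ∑ i ∈ T, dist i q := by
    rw [hTdef, Finset.sum_sdiff_eq_sub hSsub]; ring
  have hSq : (0:ℝ) ≤ ∑ i ∈ S, dist i q := Finset.sum_nonneg fun i _ => dist_nonneg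
  have hTq : (0:ℝ) ≤ ∑ i ∈ T, dist i q := Finset.sum_nonneg fun i _ => dist_nonneg
  have hb : (0:ℝ) < 1 / β := by positivity
  have hkey : 2 / β + 1 = 1 / β + (1 / β + 1) := by ring
  rw [hsplitP, hsplitQ, hkey]
  nlinarith [mul_nonneg (le_of_lt hb) hTq]
end

section
/- There exists a family of instances on the real line showing that bounded distortion does not imply being a β-plurality point for any β > 0: for n even with n/2 − 1 agents at 0 and n/2 + 1 agents at 1, the point 0 has distortion at most 2, but for every β > 0 (with n sufficiently large depending on β), the point 0 is not a β-plurality point. -/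
/-- Bounded distortion does not imply being a `β`-plurality point: on the real line with
`n/2 - 1` agents at `0` and `n/2 + 1` agents at `1`, the point `0` has distortion at most `2`,
yet for every `β > 0` (and `n` large enough) it is not a `β`-plurality point. -/
theorem distortion_not_imp_plurality :
    ∀ β : ℝ, 0 < β → ∃ n₀ : ℕ, ∀ n : ℕ, n₀ ≤ n → Even n →
      (∀ q : ℝ,
        ((n / 2 - 1 : ℕ) : ℝ) * |(0 : ℝ) - 0| + ((n / 2 + 1 : ℕ) : ℝ) * |(1 : ℝ) - 0| ≤
          2 * (((n / 2 - 1 : ℕ) : ℝ) * |(0 : ℝ) - q| + ((n / 2 + 1 : ℕ) : ℝ) * |(1 : ℝ) - q|)) ∧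
      ∃ q : ℝ,
        ((((if β * |(0 : ℝ) - 0| ≤ |(0 : ℝ) - q| then n / 2 - 1 else 0) +
            (if β * |(1 : ℝ) - 0| ≤ |(1 : ℝ) - q| then n / 2 + 1 else 0) : ℕ)) : ℝ)
          < (n : ℝ) / 2 := by
  intro β hβ
  refine ⟨6, fun n hn he => ?_⟩
  obtain ⟨m, rfl⟩ := he
  have hm : 3 ≤ m := by omega
  have hdiv : (m + m) / 2 = m := by omega
  rw [hdiv]
  have hm1 : ((m - 1 : ℕ) : ℝ) = (m : ℝ) - 1 := by
    have : 1 ≤ m := by omega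
    push_cast [this]; ring
  have hm3 : (3 : ℝ) ≤ (m : ℝ) := by exact_mod_cast hm
  constructor
  · intro q
    have h1 : (1 : ℝ) ≤ |(0 : ℝ) - q| + |(1 : ℝ) - q| := by
      have := abs_sub_abs_le_abs_sub (1 - q) (0 - q)
      have h2 := abs_sub ((1:ℝ) - q) ((0:ℝ) - q)
      have : |(1:ℝ) - q - (0 - q)| ≤ |(0:ℝ) - q| + |(1:ℝ) - q| := by
        calc |(1:ℝ) - q - (0 - q)| ≤ |(1:ℝ) - q| + |(0:ℝ) - q| := abs_sub _ _
          _ = |(0:ℝ) - q| + |(1:ℝ) - q| := by ring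
      simpa using this
    have ha : (0:ℝ) ≤ |(0:ℝ) - q| := abs_nonneg _
    have hb : (0:ℝ) ≤ |(1:ℝ) - q| := abs_nonneg _
    rw [hm1]
    push_cast
    simp only [sub_zero, abs_one, abs_zero]
    nlinarith
  · refine ⟨1, ?_⟩
    have c1 : β * |(0 : ℝ) - 0| ≤ |(0 : ℝ) - 1| := by simp
    have c2 : ¬ (β * |(1 : ℝ) - 0| ≤ |(1 : ℝ) - 1|) := by
      simp only [sub_zero, abs_one, mul_one, sub_self, abs_zero, not_le]
      linarith
    rw [if_pos c1, if_neg c2, add_zero, hm1]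
    push_cast
    linarith
end

section
/- Suppose p, q, i, j, r are points in a metric space satisfying d(i,p) ≤ d(i,r), d(j,r) is arbitrary with r the point nominated by j, and the triangle inequality holds. If d(i,p) ≤ d(i,q) + 2·d(j,q) and d(j,p) ≤ d(j,q) + d(i,q) + d(i,p), then min(d(i,p)/d(i,q), d(j,p)/d(j,q)) ≤ 2 + √5 (where d(i,q), d(j,q) > 0). -/
/-- Key inequality for plurality veto: from the two triangle-inequality bounds it follows that
`min (d(i,p)/d(i,q)) (d(j,p)/d(j,q)) ≤ 2 + √5`. -/
theorem plurality_veto_key_ineq {X : Type*} [MetricSpace X] (p q i j : X)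
    (hiq : 0 < dist i q) (hjq : 0 < dist j q)
    (h1 : dist i p ≤ dist i q + 2 * dist j q)
    (h2 : dist j p ≤ dist j q + dist i q + dist i p) :
    min (dist i p / dist i q) (dist j p / dist j q) ≤ 2 + Real.sqrt 5 := by
  have hs : Real.sqrt 5 ^ 2 = 5 := Real.sq_sqrt (by norm_num)
  have hs0 : (0:ℝ) ≤ Real.sqrt 5 := Real.sqrt_nonneg 5
  rcases le_or_gt (2 * dist j q) ((1 + Real.sqrt 5) * dist i q) with h | h
  · refine le_trans (min_le_left _ _) ?_
    rw [div_le_iff₀ hiq]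
    nlinarith
  · refine le_trans (min_le_right _ _) ?_
    rw [div_le_iff₀ hjq]
    nlinarith [hiq.le, hjq.le]
end

section
/- For any positive reals a, b, min((a + 2b)/a, (3b + 2a)/b) ≤ 2 + √5. -/
/-- For positive reals `a, b`, `min ((a + 2b)/a) ((3b + 2a)/b) ≤ 2 + √5`. -/
theorem min_ratio_le_two_add_sqrt_five (a b : ℝ) (ha : 0 < a) (hb : 0 < b) :
    min ((a + 2 * b) / a) ((3 * b + 2 * a) / b) ≤ 2 + Real.sqrt 5 := by
  set s := Real.sqrt 5 with hs
  have hs2 : s ^ 2 = 5 := Real.sq_sqrt (by norm_num)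
  have hs1 : 1 ≤ s := by nlinarith [Real.sqrt_nonneg 5]
  rcases le_or_gt ((a + 2 * b) / a) (2 + s) with h | h
  · exact le_trans (min_le_left _ _) h
  · refine le_trans (min_le_right _ _) ?_
    rw [div_le_iff₀ hb]
    rw [lt_div_iff₀ ha] at h
    nlinarith
end

section
/- For any positive reals a, b, min((5a + 2b)/a, (6a + 3b)/b) ≤ 4 + √13. -/
/-!
With `x = b / a` the two ratios are `5 + 2x`, increasing in `x`, and `3 + 6/x`, decreasing for
`x > 0`. They cross at `x = (√13 - 1)/2`, where both equal `4 + √13` because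
`(√13 - 1)(√13 + 1) = 12`; on either side of the crossing one of them is at most that value.
-/

open Real

lemma sqrt_thirteen_sub_one_mul_add_one : (√13 - 1) * (√13 + 1) = 12 := by
  have h : √13 ^ 2 = 13 := sq_sqrt (by norm_num)
  linear_combination h

lemma one_lt_sqrt_thirteen : 1 < √13 := by
  rw [lt_sqrt zero_le_one]
  norm_num

lemma min_five_add_two_mul_three_add_six_div_le (x : ℝ) :
    min (5 + 2 * x) (3 + 6 / x) ≤ 4 + √13 := by
  have hs := one_lt_sqrt_thirteen
  rcases le_or_gt x ((√13 - 1) / 2) with hx | hx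
  · exact (min_le_left _ _).trans (by linarith)
  · have hx₀ : 0 < x := by linarith
    have hx' : 12 < (√13 + 1) * 2 * x := by
      rw [← sqrt_thirteen_sub_one_mul_add_one]
      nlinarith
    have h : 6 / x ≤ √13 + 1 := by
      rw [div_le_iff₀ hx₀]
      linarith
    exact (min_le_right _ _).trans (by linarith)

/-- For positive reals `a, b`, `min ((5a + 2b)/a) ((6a + 3b)/b) ≤ 4 + √13`. -/
theorem min_ratio_le_four_add_sqrt_thirteen (a b : ℝ) (ha : 0 < a) (hb : 0 < b) :
    min ((5 * a + 2 * b) / a) ((6 * a + 3 * b) / b) ≤ 4 + Real.sqrt 13 := by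
  have h₁ : (5 * a + 2 * b) / a = 5 + 2 * (b / a) := by field_simp
  have h₂ : (6 * a + 3 * b) / b = 3 + 6 / (b / a) := by
    field_simp
    ring
  rw [h₁, h₂]
  exact min_five_add_two_mul_three_add_six_div_le (b / a)
end

section
/- If an outcome W of size k satisfies ℓ-rank-JR for some integer ℓ > n/(k+1), then W satisfies (2+√5)-approximate ℓ-proportionality: there is no group N' ⊆ N with |N'| ≥ ℓ and candidate c ∈ C such that (2+√5)·d(i,c) < d(i,W) for all i ∈ N'. -/
open scoped Classical

/-- `rank C i c` is the rank that agent `i` gives to candidate `c` among the candidate set `C`: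
the number of candidates at distance at most `dist i c` from `i`. -/
noncomputable def rankOf {X : Type*} [MetricSpace X] (C : Finset X) (i c : X) : ℕ :=
  (C.filter fun c' => dist i c' ≤ dist i c).card

/-- If `W` (of size `k`) satisfies `ℓ`-rank-JR for an integer `ℓ > n/(k+1)`, then `W` satisfies
`(2 + √5)`-approximate `ℓ`-proportionality. -/
theorem rankJR_imp_proportionality {X : Type*} [MetricSpace X]
    (N C W : Finset X) (hWC : W ⊆ C) (hWne : W.Nonempty) (k ℓ : ℕ) (hk : W.card = k)
    (hℓ : (N.card : ℝ) / (k + 1) < (ℓ : ℝ))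
    (hJR : ∀ r : ℕ, ∀ N' ⊆ N, ℓ ≤ N'.card →
      (∃ c ∈ C, ∀ i ∈ N', rankOf C i c ≤ r) → ∃ w ∈ W, ∃ i ∈ N', rankOf C i w ≤ r) :
    ¬ ∃ N' ⊆ N, ℓ ≤ N'.card ∧ ∃ c ∈ C, ∀ i ∈ N',
        (2 + Real.sqrt 5) * dist i c < W.inf' hWne fun w => dist i w := by
  rintro ⟨N', hN'N, hcard, c, hcC, hblock⟩
  rcases N'.eq_empty_or_nonempty with hne | hne
  · obtain ⟨w, -, i, hi, -⟩ := hJR 0 N' hN'N hcard ⟨c, hcC, by simp [hne]⟩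
    simp [hne] at hi
  · have hs0 : (0:ℝ) ≤ Real.sqrt 5 := Real.sqrt_nonneg 5
    have hs5 : Real.sqrt 5 ^ 2 = 5 := Real.sq_sqrt (by norm_num)
    have hs2 : (2:ℝ) < Real.sqrt 5 := by nlinarith
    obtain ⟨jm, hjm, hjmax⟩ := N'.exists_max_image (fun j => dist j c) hne
    have hD0 : (0:ℝ) ≤ dist jm c := dist_nonneg
    set S := C.filter (fun c' => dist c c' ≤ 2 * dist jm c) with hS
    have hr : ∀ i ∈ N', rankOf C i c ≤ S.card := by
      intro i hi
      apply Finset.card_le_card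
      intro x hx
      simp only [Finset.mem_filter, hS] at hx ⊢
      refine ⟨hx.1, ?_⟩
      have h1 : dist c x ≤ dist c i + dist i x := dist_triangle ..
      have h2 : dist i c ≤ dist jm c := hjmax i hi
      have h3 := hx.2
      rw [dist_comm c i] at h1
      linarith
    obtain ⟨w, hwW, j, hjN, hrank⟩ := hJR S.card N' hN'N hcard ⟨c, hcC, hr⟩
    have hwC : w ∈ C := hWC hwW
    have hinfj : (W.inf' hWne fun x => dist j x) ≤ dist j w := Finset.inf'_le _ hwW
    have hinfjm : (W.inf' hWne fun x => dist jm x) ≤ dist jm w := Finset.inf'_le _ hwW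
    have hbj := hblock j hjN
    have hbjm := hblock jm hjm
    have hdjc : (0:ℝ) ≤ dist j c := dist_nonneg
    have hkey : dist j w ≤ dist j c + 2 * dist jm c := by
      by_contra hgt
      push_neg at hgt
      by_cases hwS : w ∈ S
      · have hcw : dist c w ≤ 2 * dist jm c := (Finset.mem_filter.mp hwS).2
        have htr : dist jm w ≤ dist jm c + dist c w := dist_triangle ..
        nlinarith
      · have hsub : insert w S ⊆ C.filter (fun c' => dist j c' ≤ dist j w) := by
          intro x hx
          rcases Finset.mem_insert.mp hx with rfl | hxS
          · exact Finset.mem_filter.mpr ⟨hwC, le_refl _⟩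
          · obtain ⟨hxC, hxd⟩ := Finset.mem_filter.mp hxS
            refine Finset.mem_filter.mpr ⟨hxC, ?_⟩
            have htr : dist j x ≤ dist j c + dist c x := dist_triangle ..
            linarith
        have hcards := Finset.card_le_card hsub
        rw [Finset.card_insert_of_notMem hwS] at hcards
        have heq : rankOf C j w = (C.filter fun c' => dist j c' ≤ dist j w).card := rfl
        omega
    have htri : dist jm w ≤ dist jm c + dist c j + dist j w := dist_triangle4 ..
    have hcj : dist c j = dist j c := dist_comm ..
    -- (1 + √5) * dist j c < 2 * dist jm c  and  (√5 - 1) * dist jm c < 2 * dist j c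
    nlinarith [mul_nonneg hD0 hdjc, sq_nonneg (dist jm c - dist j c),
      mul_le_mul_of_nonneg_left hkey (by linarith : (0:ℝ) ≤ Real.sqrt 5 - 1)]
end

section
/- Let i, j, c be points in a metric space and suppose d(j,w) ≤ d(j,c) + 2·d(i,c) for some point w, and d(i,w) ≤ d(i,c) + d(j,c) + d(j,w). Then min(d(i,w)/d(i,c), d(j,w)/d(j,c)) ≤ 2 + √5, provided d(i,c), d(j,c) > 0. -/
/-- Key step showing rank-JR implies `(2 + √5)`-proportionality. -/
theorem rankJR_key_ineq {X : Type*} [MetricSpace X] (i j c w : X)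
    (hic : 0 < dist i c) (hjc : 0 < dist j c)
    (h1 : dist j w ≤ dist j c + 2 * dist i c)
    (h2 : dist i w ≤ dist i c + dist j c + dist j w) :
    min (dist i w / dist i c) (dist j w / dist j c) ≤ 2 + Real.sqrt 5 := by
  have h5 : Real.sqrt 5 ^ 2 = 5 := Real.sq_sqrt (by norm_num)
  have h5n : 0 ≤ Real.sqrt 5 := Real.sqrt_nonneg 5
  rcases le_or_gt (2 * dist i c) ((1 + Real.sqrt 5) * dist j c) with h | h
  · apply min_le_of_right_le
    rw [div_le_iff₀ hjc]
    nlinarith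
  · apply min_le_of_left_le
    rw [div_le_iff₀ hic]
    nlinarith
end

section
/- For the q-th nearest point distance function d^q in a metric space, the triangle-type inequality d^q(i,S) ≤ d(i,j) + d^q(j,S) holds for all points i, j and all finite sets S with |S| ≥ q. -/
open scoped Classical

/-- `dq q i S`: the distance from `i` to its `q`-th closest point of `S`. -/
noncomputable def dq {X : Type*} [MetricSpace X] (q : ℕ) (i : X) (S : Finset X) : ℝ :=
  sInf {y : ℝ | q ≤ (S.filter fun s => dist i s ≤ y).card}

/-- Triangle-type inequality for the `q`-th nearest point distance:
`d^q(i,S) ≤ d(i,j) + d^q(j,S)`. -/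
theorem dq_triangle {X : Type*} [MetricSpace X] (q : ℕ) (i j : X) (S : Finset X)
    (hS : q ≤ S.card) :
    dq q i S ≤ dist i j + dq q j S := by
  rcases Nat.eq_zero_or_pos q with hq | hq
  · subst hq
    have h1 : dq 0 i S = sInf Set.univ := by
      unfold dq
      congr 1
      ext y; simp
    have h2 : dq 0 j S ≥ 0 := by
      unfold dq
      have : ¬ BddBelow {y : ℝ | 0 ≤ (S.filter fun s => dist j s ≤ y).card} := by
        intro ⟨b, hb⟩
        have := hb (show b - 1 ∈ _ by simp)
        linarith
      rw [Real.sInf_of_not_bddBelow this]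
    rw [h1]
    have : ¬ BddBelow (Set.univ : Set ℝ) := by
      intro ⟨b, hb⟩
      have := hb (Set.mem_univ (b - 1))
      linarith
    rw [Real.sInf_of_not_bddBelow this]
    positivity
  · set A := {y : ℝ | q ≤ (S.filter fun s => dist i s ≤ y).card} with hA
    set B := {y : ℝ | q ≤ (S.filter fun s => dist j s ≤ y).card} with hB
    have hAbdd : BddBelow A := by
      refine ⟨0, fun y hy => ?_⟩
      by_contra hneg
      push_neg at hneg
      have : (S.filter fun s => dist i s ≤ y) = ∅ := by
        ext s; simp only [Finset.mem_filter, Finset.notMem_empty, iff_false]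
        rintro ⟨-, hd⟩
        have := dist_nonneg (x := i) (y := s)
        linarith
      rw [hA] at hy
      simp only [Set.mem_setOf_eq, this, Finset.card_empty] at hy
      omega
    have hBne : B.Nonempty := by
      obtain ⟨M, hM⟩ := (S.image fun s => dist j s).exists_le
      refine ⟨M, ?_⟩
      rw [hB]
      simp only [Set.mem_setOf_eq]
      have : S.filter (fun s => dist j s ≤ M) = S := by
        apply Finset.filter_true_of_mem
        intro s hs
        exact hM _ (Finset.mem_image_of_mem _ hs)
      rw [this]; exact hS
    have key : ∀ y ∈ B, dq q i S ≤ dist i j + y := by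
      intro y hy
      apply csInf_le hAbdd
      rw [hA]
      simp only [Set.mem_setOf_eq]
      refine le_trans hy (Finset.card_le_card ?_)
      intro s hs
      simp only [Finset.mem_filter] at hs ⊢
      refine ⟨hs.1, ?_⟩
      calc dist i s ≤ dist i j + dist j s := dist_triangle i j s
        _ ≤ dist i j + y := by linarith [hs.2]
    have : dq q i S - dist i j ≤ dq q j S := by
      apply le_csInf hBne
      intro y hy
      linarith [key y hy]
    linarith
end

section
/- If a clustering W = {p} of size k = 1 satisfies α-approximate ℓ-proportionality with ℓ = ⌊n/2⌋ + 1, then p is a (1/α)-plurality point. -/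
open scoped Classical

/-- If the singleton clustering `{p}` satisfies `α`-approximate `ℓ`-proportionality with
`ℓ = ⌊n/2⌋ + 1`, then `p` is a `(1/α)`-plurality point. -/
theorem proportional_imp_plurality {X : Type*} [MetricSpace X]
    (N : Finset X) (α : ℝ) (hα : 1 ≤ α) (p : X)
    (hprop : ¬ ∃ (N' : Finset X) (c : X), N' ⊆ N ∧ N.card / 2 + 1 ≤ N'.card ∧
        ∀ i ∈ N', α * dist i c < dist i p) :
    ∀ q : X, ((N.filter fun i => (1 / α) * dist i p ≤ dist i q).card : ℝ) ≥ (N.card : ℝ) / 2 := by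
  intro q
  by_contra h
  push_neg at h
  have hα0 : (0:ℝ) < α := lt_of_lt_of_le one_pos hα
  set m := (N.filter fun i => (1 / α) * dist i p ≤ dist i q).card with hm
  have hsum : m + (N.filter fun i => ¬ ((1 / α) * dist i p ≤ dist i q)).card = N.card :=
    Finset.card_filter_add_card_filter_not _
  have h2mr : ((2 * m : ℕ) : ℝ) < (N.card : ℝ) := by push_cast; linarith
  have h2m : 2 * m < N.card := by exact_mod_cast h2mr
  apply hprop
  refine ⟨N.filter fun i => ¬ ((1 / α) * dist i p ≤ dist i q), q, Finset.filter_subset _ _, ?_, ?_⟩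
  · omega
  · intro i hi
    have := (Finset.mem_filter.mp hi).2
    push_neg at this
    calc α * dist i q < α * ((1/α) * dist i p) := by
          exact mul_lt_mul_of_pos_left this hα0
      _ = dist i p := by field_simp
end
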